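/- Main safety step (Theorem 1 of CASPaxos): Under the quorum-intersection and acceptor-monotonicity assumptions, for any acknowledged event x and accepted event y with b(x) < b(y), the ballot of y's predecessor satisfies b(x) ≤ b(I⁻¹(y)), where I⁻¹(y) has ballot equal to the maximum ret.b over y's promise set. -/
import Mathlib

/-- Main safety step (Theorem 1 of CASPaxos).  An acknowledged event x has,
for each acceptor n in its write quorum Wx, an accepted event `w n` with
ballot b(x); an accepted event y has, for each acceptor n in its promise
quorum Ry, a promise event `u n` with ballot b(y) whose ret.b is the
maximum ballot accepted on n before ts(u n).  Under quorum intersection and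
acceptor monotonicity, b(x) ≤ b(I⁻¹ y), where b(I⁻¹ y) is the maximum
ret.b over y's promise set. -/
theorem caspaxos_safety_step {ι E : Type*} [DecidableEq ι] [DecidableEq E]
    (Wx Ry : Finset ι) (hinter : (Wx ∩ Ry).Nonempty)
    (bx byb : ℕ) (hlt : bx < byb)
    (w u : ι → E) (b ts : E → ℕ)
    (Acc : ι → Finset E)
    (hwAcc : ∀ n ∈ Wx, w n ∈ Acc n)
    (hbw : ∀ n ∈ Wx, b (w n) = bx)
    (hbu : ∀ n ∈ Ry, b (u n) = byb)
    (hmono : ∀ n : ι, ∀ e₁ ∈ Acc n, b e₁ < b (u n) → ts e₁ < ts (u n))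
    (hretne : ∀ n ∈ Wx ∩ Ry,
      ((Acc n).filter (fun l => ts l < ts (u n))).Nonempty)
    (ret : ι → ℕ)
    (hret : ∀ n : ι, ∀ hn : n ∈ Wx ∩ Ry,
      ret n = (((Acc n).filter (fun l => ts l < ts (u n))).image b).max'
        ((hretne n hn).image b))
    (bI : ℕ)
    (hbI : bI = (Ry.image ret).max'
      (Finset.Nonempty.image (hinter.mono Finset.inter_subset_right) ret)) :
    bx ≤ bI := by
  obtain ⟨n, hn⟩ := hinter
  have hnW : n ∈ Wx := Finset.mem_of_mem_inter_left hn
  have hnR : n ∈ Ry := Finset.mem_of_mem_inter_right hn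
  have hts : ts (w n) < ts (u n) := by
    apply hmono n _ (hwAcc n hnW)
    rw [hbw n hnW, hbu n hnR]; exact hlt
  have hmem : b (w n) ∈ ((Acc n).filter (fun l => ts l < ts (u n))).image b :=
    Finset.mem_image_of_mem b (Finset.mem_filter.mpr ⟨hwAcc n hnW, hts⟩)
  have h1 : bx ≤ ret n := by
    rw [hret n hn, ← hbw n hnW]
    exact Finset.le_max' _ _ hmem
  have h2 : ret n ≤ bI := by
    rw [hbI]
    exact Finset.le_max' _ _ (Finset.mem_image_of_mem ret hnR)
  exact h1.trans h2
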